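/- arXiv:1103.3710 — 2 statements merged into one kernel-verified Lean document; each statement's English description precedes it below -/
import Mathlib

section
/- Every continuous map from ω₁ (with the order topology) into a first countable, Hausdorff, Lindelöf topological space is eventually constant. -/
/-- ω₁, the first uncountable ordinal. -/
noncomputable def omega1 : Ordinal := (Cardinal.aleph 1).ord

/-- The space of countable ordinals. -/
def Omega1 : Type 1 := {o : Ordinal // o < omega1}

noncomputable instance : LinearOrder Omega1 :=
  inferInstanceAs (LinearOrder {o : Ordinal // o < omega1})

/-- ω₁ carries the order topology. -/
noncomputable instance : TopologicalSpace Omega1 := Preorder.topology Omega1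
instance : OrderTopology Omega1 := ⟨rfl⟩

/-! The image under `f` of the filter of cofinal subsets of ω₁ has the countable intersection
property, so by Lindelöfness it has a cluster point `x`. Countably many closed cofinal subsets of
ω₁ meet above any given ordinal, at the limit of an increasing sequence visiting each of them
infinitely often. Applied to the preimages of the closures of a countable neighbourhood basis of
`x`, this shows that `f` takes the value `x` cofinally. If `f` also left a basic neighbourhood `U`
of `x` cofinally, the closed cofinal sets `f ⁻¹' {x}` and `f ⁻¹' (interior U)ᶜ` would meet. -/

open Set Filter Topology

theorem Filter.HasBasis.iInter_closure_eq_singleton {X ι : Type*} [TopologicalSpace X]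
    [T2Space X] {x : X} {s : ι → Set X} (hb : (𝓝 x).HasBasis (fun _ => True) s) :
    ⋂ i, closure (s i) = {x} := by
  ext y
  simp only [mem_iInter, mem_singleton_iff]
  refine ⟨fun hy => by_contra fun hne => ?_,
    by rintro rfl i; exact subset_closure (mem_of_mem_nhds (hb.mem_of_mem trivial))⟩
  obtain ⟨i, -, hi⟩ := hb.disjoint_iff_right.1 (disjoint_nhds_nhds.2 hne)
  obtain ⟨z, hz, hz'⟩ := mem_closure_iff_nhds.1 (hy i) _ hi
  exact hz hz'

theorem omega1_eq_omega_one : omega1 = Ordinal.omega 1 := Cardinal.ord_aleph 1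

namespace Omega1

instance : Nonempty Omega1 := ⟨⟨0, omega1_eq_omega_one ▸ Ordinal.omega_pos 1⟩⟩

theorem exists_isLUB_range {ι : Type*} [Countable ι] (g : ι → Omega1) :
    ∃ δ, IsLUB (range g) δ := by
  have hbdd : BddAbove (range fun i => (g i).1) := ⟨omega1, by rintro _ ⟨i, rfl⟩; exact (g i).2.le⟩
  have hlt : ⨆ i, (g i).1 < omega1 :=
    (Ordinal.iSup_lt_omega_one fun i => (g i).2.trans_eq omega1_eq_omega_one).trans_eq
      omega1_eq_omega_one.symm
  exact ⟨⟨_, hlt⟩, by rintro _ ⟨i, rfl⟩; exact le_ciSup hbdd i,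
    fun c hc => show _ ≤ c.1 from ciSup_le' fun i => hc ⟨i, rfl⟩⟩

instance : CountableInterFilter (atTop : Filter Omega1) where
  countable_sInter_mem S hS hmem := by
    choose a ha using fun s : S => mem_atTop_sets.1 (hmem s s.2)
    have := hS.to_subtype
    obtain ⟨δ, hδ⟩ := exists_isLUB_range a
    exact mem_atTop_sets.2 ⟨δ, fun β hβ s hs => ha ⟨s, hs⟩ β ((hδ.1 ⟨⟨s, hs⟩, rfl⟩).trans hβ)⟩

theorem frequently_mem_iInter {C : ℕ → Set Omega1} (hC : ∀ n, IsClosed (C n))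
    (h : ∀ n, ∃ᶠ β in atTop, β ∈ C n) : ∃ᶠ β in atTop, β ∈ ⋂ n, C n := by
  simp only [frequently_atTop] at h ⊢
  intro α
  choose next hle hmem using h
  -- `u` enters `C n` at every step `Nat.pair n m + 1`, so its limit lies in every `C n`.
  let u : ℕ → Omega1 := fun k => Nat.rec α (fun k β => next k.unpair.1 β) k
  obtain ⟨δ, hδ⟩ := exists_isLUB_range u
  have hu : Tendsto u atTop (𝓝 δ) :=
    tendsto_atTop_isLUB (monotone_nat_of_le_succ fun k => hle _ _) hδ
  refine ⟨δ, hδ.1 ⟨0, rfl⟩, mem_iInter.2 fun n => (hC n).mem_of_tendsto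
    (hu.comp (tendsto_atTop_mono (fun m => (Nat.right_le_pair n m).trans (Nat.le_succ _))
      tendsto_id)) (Eventually.of_forall fun m => ?_)⟩
  show next (Nat.pair n m).unpair.1 (u (Nat.pair n m)) ∈ C n
  rw [Nat.unpair_pair]
  exact hmem _ _

theorem frequently_mem_inter {C D : Set Omega1} (hC : IsClosed C) (hD : IsClosed D)
    (hC' : ∃ᶠ β in atTop, β ∈ C) (hD' : ∃ᶠ β in atTop, β ∈ D) :
    ∃ᶠ β in atTop, β ∈ C ∩ D := by
  have := frequently_mem_iInter (C := fun n => if n = 0 then C else D)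
    (fun n => by split_ifs <;> assumption) (fun n => by split_ifs <;> assumption)
  exact this.mono fun β hβ => ⟨by simpa using mem_iInter.1 hβ 0, by simpa using mem_iInter.1 hβ 1⟩

variable {X : Type*} [TopologicalSpace X] [FirstCountableTopology X] [T2Space X]
  {f : Omega1 → X} {x : X}

theorem frequently_eq_of_clusterPt (hf : Continuous f) (hx : ClusterPt x (map f atTop)) :
    ∃ᶠ β in atTop, f β = x := by
  obtain ⟨b, hb⟩ := (𝓝 x).exists_antitone_basis
  have := frequently_mem_iInter (C := fun n => f ⁻¹' closure (b n))
    (fun n => isClosed_closure.preimage hf)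
    fun n => (hx.frequently (hb.mem n)).mono fun _ hy => subset_closure hy
  simpa [← preimage_iInter, hb.toHasBasis.iInter_closure_eq_singleton] using this

theorem eventually_eq_of_frequently_eq (hf : Continuous f) (h : ∃ᶠ β in atTop, f β = x) :
    ∀ᶠ β in atTop, f β = x := by
  obtain ⟨b, hb⟩ := (𝓝 x).exists_antitone_basis
  have hxb := hb.toHasBasis.iInter_closure_eq_singleton
  by_contra hne
  simp only [← mem_singleton_iff, ← hxb, mem_iInter, eventually_countable_forall,
    not_forall, not_eventually] at hne
  obtain ⟨n, hn⟩ := hne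
  obtain ⟨β, hβx, hβn⟩ := (frequently_mem_inter (isClosed_singleton.preimage hf)
    (isOpen_interior.isClosed_compl.preimage hf) h
    (hn.mono fun _ hy => mt (fun hy' => interior_subset.trans subset_closure hy') hy)).exists
  exact hβn ((mem_singleton_iff.1 hβx) ▸ mem_interior_iff_mem_nhds.2 (hb.mem n))

end Omega1

/-- Every continuous map from ω₁ into a first countable Hausdorff Lindelöf space
is eventually constant. -/
theorem continuous_omega1_eventually_constant (X : Type*) [TopologicalSpace X]
    [FirstCountableTopology X] [T2Space X] [LindelofSpace X]
    (f : Omega1 → X) (hf : Continuous f) :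
    ∃ α : Omega1, ∀ β : Omega1, α ≤ β → f β = f α := by
  obtain ⟨x, -, hx⟩ := isLindelof_univ (f := map f atTop) (le_principal_iff.2 univ_mem)
  obtain ⟨α, hα⟩ := eventually_atTop.1 <|
    Omega1.eventually_eq_of_frequently_eq hf (Omega1.frequently_eq_of_clusterPt hf hx)
  exact ⟨α, fun β hβ => (hα β hβ).trans (hα α le_rfl).symm⟩
end

section
/- If h : [0,1] × ω₁ → M is a homotopy into a topological space M such that h(0, ·) is eventually constant, and t_n is a sequence increasing to τ in [0,1] such that each h(t_n, ·) is eventually constant, then h(τ, ·) is eventually constant. -/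
/-- A map on ω₁ is eventually constant if it is constant on a tail [α, ω₁). -/
def EventuallyConstantOn {M : Type*} (g : Omega1 → M) : Prop :=
  ∃ α : Omega1, ∀ β : Omega1, α ≤ β → g β = g α

open Filter Topology

open Cardinal in
theorem Omega1.exists_forall_le_of_countable {ι : Type*} [Countable ι] (a : ι → Omega1) :
    ∃ α : Omega1, ∀ i, a i ≤ α := by
  have hcof : lift.{0} #ι < (Ordinal.lift.{_, 0} omega1).cof := by
    rw [← Ordinal.lift_cof, omega1, isRegular_aleph_one.cof_ord, lift_aleph, Ordinal.lift_one,
      lt_aleph_one_iff, lift_le_aleph0]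
    exact mk_le_aleph0
  exact ⟨⟨_, Ordinal.lift_iSup_lt_of_lt_cof hcof fun i => (a i).2⟩,
    fun i => Ordinal.le_iSup (fun i => (a i).1) i⟩

theorem EventuallyConstantOn.of_tendsto {ι X : Type*} [Countable ι] [TopologicalSpace X]
    [T2Space X] {l : Filter ι} [l.NeBot] {g : ι → Omega1 → X} {f : Omega1 → X}
    (hg : ∀ i, EventuallyConstantOn (g i)) (hlim : ∀ β, Tendsto (fun i => g i β) l (𝓝 (f β))) :
    EventuallyConstantOn f := by
  choose a ha using hg
  obtain ⟨α, hα⟩ := Omega1.exists_forall_le_of_countable a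
  refine ⟨α, fun β hβ => tendsto_nhds_unique ?_ (hlim α)⟩
  have hgβ : (fun i => g i β) = fun i => g i α := funext fun i =>
    (ha i β ((hα i).trans hβ)).trans (ha i α (hα i)).symm
  exact hgβ ▸ hlim β

theorem eventuallyConstant_at_limit_general (M : Type*) [TopologicalSpace M] [T2Space M]
    (h : unitInterval × Omega1 → M) (hcont : Continuous h)
    (t : ℕ → unitInterval) (τ : unitInterval)
    (hlim : Filter.Tendsto t Filter.atTop (nhds τ))
    (hec : ∀ n, EventuallyConstantOn (fun β => h (t n, β))) :
    EventuallyConstantOn (fun β => h (τ, β)) :=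
  .of_tendsto hec fun β => (hcont.tendsto (τ, β)).comp (hlim.prodMk_nhds tendsto_const_nhds)

/-- If h : [0,1] × ω₁ → M is a homotopy with h(0,·) eventually constant, and
t n is a sequence increasing to τ with each h(t n, ·) eventually constant, then
h(τ, ·) is eventually constant. -/
theorem eventuallyConstant_at_limit (M : Type*) [TopologicalSpace M] [T2Space M]
    [FirstCountableTopology M]
    (h : unitInterval × Omega1 → M) (hcont : Continuous h)
    (h0 : EventuallyConstantOn (fun β => h (0, β)))
    (t : ℕ → unitInterval) (τ : unitInterval) (hmono : Monotone t)
    (hlim : Filter.Tendsto t Filter.atTop (nhds τ))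
    (hec : ∀ n, EventuallyConstantOn (fun β => h (t n, β))) :
    EventuallyConstantOn (fun β => h (τ, β)) :=
  eventuallyConstant_at_limit_general M h hcont t τ hlim hec
end
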